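/- Let W_x ∈ ℝ^{n×n} with ‖W_x‖ < 1 and W_in ∈ ℝ^{n×m}, and define the Echo State Network state map f(x, ω) = tanh(W_x x + W_in ω). Then for every input sequence ω : ℕ → ℝᵐ and all initial states x₀, x₀' ∈ ℝⁿ, the difference of the corresponding trajectories converges to zero: ‖x(k, x₀, ω) − x(k, x₀', ω)‖₂ → 0 as k → ∞. -/

import Mathlib

/-!
Since `tanh' = 1 / cosh² ≤ 1`, componentwise `tanh` is 1-Lipschitz for the Euclidean norm, so
for a fixed input the state map `x ↦ tanh (W_x x + W_in ω)` is Lipschitz with constant `‖W_x‖ < 1`.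
Two trajectories driven by the same input therefore approach each other geometrically:
`‖x k - x' k‖ ≤ ‖W_x‖ ^ k * ‖x 0 - x' 0‖`.
-/

open Matrix
open scoped Matrix.Norms.L2Operator

theorem Real.hasDerivAt_tanh (x : ℝ) : HasDerivAt tanh (cosh x ^ 2)⁻¹ x := by
  have h := (hasDerivAt_sinh x).div (hasDerivAt_cosh x) (cosh_pos x).ne'
  rw [← sq, ← sq, cosh_sq_sub_sinh_sq, one_div] at h
  rwa [show tanh = sinh / cosh from funext tanh_eq_sinh_div_cosh]

theorem Real.lipschitzWith_tanh : LipschitzWith 1 tanh := by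
  refine lipschitzWith_of_nnnorm_deriv_le (fun x => (hasDerivAt_tanh x).differentiableAt) fun x => ?_
  rw [(hasDerivAt_tanh x).deriv, ← NNReal.coe_le_coe, coe_nnnorm, NNReal.coe_one, norm_inv,
    norm_pow, norm_of_nonneg (cosh_pos x).le]
  exact inv_le_one_of_one_le₀ (one_le_pow₀ (one_le_cosh x))

theorem LipschitzWith.piLp_two_map {ι E F : Type*} [Fintype ι] [SeminormedAddCommGroup E]
    [SeminormedAddCommGroup F] {K : NNReal} {f : E → F} (hf : LipschitzWith K f) :
    LipschitzWith K (fun v : PiLp 2 (fun _ : ι => E) => WithLp.toLp 2 (fun i => f (v i))) := by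
  refine .of_dist_le_mul fun u v => ?_
  simp only [PiLp.dist_eq_of_L2]
  calc √(∑ i, dist (f (u i)) (f (v i)) ^ 2) ≤ √(∑ i, (K * dist (u i) (v i)) ^ 2) := by
        gcongr with i
        exact hf.dist_le_mul _ _
    _ = K * √(∑ i, dist (u i) (v i) ^ 2) := by
        rw [← Finset.sum_congr rfl fun i _ => (mul_pow _ _ 2).symm, ← Finset.mul_sum,
          Real.sqrt_mul (sq_nonneg _), Real.sqrt_sq_eq_abs, NNReal.abs_eq]

theorem tendsto_dist_of_lipschitzWith_lt_one {X : Type*} [PseudoMetricSpace X]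
    {F : ℕ → X → X} {K : NNReal} (hF : ∀ k, LipschitzWith K (F k)) (hK : K < 1)
    {x y : ℕ → X} (hx : ∀ k, x (k + 1) = F k (x k)) (hy : ∀ k, y (k + 1) = F k (y k)) :
    Filter.Tendsto (fun k => dist (x k) (y k)) Filter.atTop (nhds 0) := by
  have bound : ∀ k, dist (x k) (y k) ≤ K ^ k * dist (x 0) (y 0) := by
    intro k
    induction k with
    | zero => simp
    | succ k ih =>
      calc dist (x (k + 1)) (y (k + 1)) ≤ K * dist (x k) (y k) := by
            rw [hx, hy]; exact (hF k).dist_le_mul _ _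
        _ ≤ K * (K ^ k * dist (x 0) (y 0)) := by gcongr
        _ = K ^ (k + 1) * dist (x 0) (y 0) := by ring
  have geom := (tendsto_pow_atTop_nhds_zero_of_lt_one K.2 hK).mul_const (dist (x 0) (y 0))
  rw [zero_mul] at geom
  exact squeeze_zero (fun k => dist_nonneg) bound geom

section EchoStateNetwork

variable {ι κ : Type*} [Fintype ι] [DecidableEq ι] [Fintype κ] [DecidableEq κ]

noncomputable def esnStep (Wx : Matrix ι ι ℝ) (Win : Matrix ι κ ℝ) (u : EuclideanSpace ℝ κ)
    (v : EuclideanSpace ℝ ι) : EuclideanSpace ℝ ι :=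
  WithLp.toLp 2 (fun i => Real.tanh ((toEuclideanLin Wx v + toEuclideanLin Win u) i))

theorem lipschitzWith_esnStep (Wx : Matrix ι ι ℝ) (Win : Matrix ι κ ℝ) (u : EuclideanSpace ℝ κ) :
    LipschitzWith ‖Wx‖₊ (esnStep Wx Win u) := by
  have affine : LipschitzWith ‖Wx‖₊ fun v => toEuclideanLin Wx v + toEuclideanLin Win u :=
    .of_dist_le_mul fun v w => by
      rw [dist_add_right]
      exact ((toEuclideanLin.trans LinearMap.toContinuousLinearMap Wx).lipschitz).dist_le_mul v w
  rw [← one_mul ‖Wx‖₊]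
  exact Real.lipschitzWith_tanh.piLp_two_map.comp affine

end EchoStateNetwork

theorem esn_trajectories_converge {n m : ℕ}
    (Wx : Matrix (Fin n) (Fin n) ℝ) (Win : Matrix (Fin n) (Fin m) ℝ)
    (hW : ‖Wx‖ < 1)
    (ω : ℕ → EuclideanSpace ℝ (Fin m)) (x x' : ℕ → EuclideanSpace ℝ (Fin n))
    (hx : ∀ k, x (k + 1) =
      (WithLp.toLp 2 (fun i => Real.tanh ((Matrix.toEuclideanLin Wx (x k) + Matrix.toEuclideanLin Win (ω k)) i)) :
        EuclideanSpace ℝ (Fin n)))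
    (hx' : ∀ k, x' (k + 1) =
      (WithLp.toLp 2 (fun i => Real.tanh ((Matrix.toEuclideanLin Wx (x' k) + Matrix.toEuclideanLin Win (ω k)) i)) :
        EuclideanSpace ℝ (Fin n))) :
    Filter.Tendsto (fun k => ‖x k - x' k‖) Filter.atTop (nhds 0) := by
  simpa only [dist_eq_norm] using
    tendsto_dist_of_lipschitzWith_lt_one (fun k => lipschitzWith_esnStep Wx Win (ω k)) hW hx hx'
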